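/- Let O = {1, ∂_x, ∂_y, ∂_x∂_y} be the order ideal in the monomials of two commuting symbols ∂_x, ∂_y. There is no ideal I of the polynomial ring ℂ[∂_x,∂_y] containing ∂_x² + ∂_y² − 2 and ∂_x∂_y − 1 such that the residue classes of 1, ∂_x, ∂_y, ∂_x∂_y are linearly independent in ℂ[∂_x,∂_y]/I and ∂_x² and ∂_y² both reduce modulo I to ℂ-linear combinations of {1, ∂_x, ∂_y, ∂_x∂_y} in a consistent way; concretely: in the quotient ℂ[∂_x,∂_y]/⟨∂_x²+∂_y²−2, ∂_x∂_y−1⟩, which is 4-dimensional over ℂ, the residue classes of 1, ∂_x, ∂_y, ∂_x∂_y do NOT form a ℂ-basis. -/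

import Mathlib

open MvPolynomial

section Aux
open Polynomial

noncomputable section

abbrev Iex : Ideal (MvPolynomial (Fin 2) ℂ) :=
  Ideal.span {MvPolynomial.X 0 ^ 2 + MvPolynomial.X 1 ^ 2 - 2, MvPolynomial.X 0 * MvPolynomial.X 1 - 1}

abbrev pex : Polynomial ℂ := (Polynomial.X ^ 2 - 1) ^ 2

abbrev Aex := AdjoinRoot pex

lemma hroot2 : (AdjoinRoot.root pex ^ 2 - 1) ^ 2 = 0 := by
  have := AdjoinRoot.mk_self (f := pex)
  simpa [map_pow, map_sub, map_one, AdjoinRoot.mk_X] using this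

noncomputable def fex : MvPolynomial (Fin 2) ℂ →ₐ[ℂ] Aex :=
  MvPolynomial.aeval ![2 * AdjoinRoot.root pex - AdjoinRoot.root pex ^ 3, AdjoinRoot.root pex]

lemma fex_vanish : ∀ a ∈ Iex, fex a = 0 := by
  have h : Iex ≤ RingHom.ker fex := by
    rw [Ideal.span_le]
    rintro x (rfl | rfl)
    · simp only [SetLike.mem_coe, RingHom.mem_ker, map_sub, map_add, map_pow, map_ofNat,
        fex, MvPolynomial.aeval_X]
      set r := AdjoinRoot.root pex
      show (![2 * r - r ^ 3, r] 0) ^ 2 + (![2 * r - r ^ 3, r] 1) ^ 2 - 2 = 0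
      simp only [Matrix.cons_val_zero, Matrix.cons_val_one, Matrix.head_cons]
      linear_combination (r ^ 2 - 2) * hroot2
    · simp only [Set.mem_insert_iff, Set.mem_singleton_iff, SetLike.mem_coe, RingHom.mem_ker,
        map_sub, map_mul, map_one, fex, MvPolynomial.aeval_X]
      show (![2 * AdjoinRoot.root pex - AdjoinRoot.root pex ^ 3, AdjoinRoot.root pex] 0) *
        (![2 * AdjoinRoot.root pex - AdjoinRoot.root pex ^ 3, AdjoinRoot.root pex] 1) - 1 = 0
      set r := AdjoinRoot.root pex
      simp only [Matrix.cons_val_zero, Matrix.cons_val_one, Matrix.head_cons]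
      linear_combination (-1 : Aex) * hroot2
  exact fun a ha => h ha

noncomputable def fbar : (MvPolynomial (Fin 2) ℂ ⧸ Iex) →ₐ[ℂ] Aex :=
  Ideal.Quotient.liftₐ Iex fex fex_vanish

lemma hIroot : ((Ideal.Quotient.mk Iex (MvPolynomial.X 1)) ^ 2 - 1) ^ 2 = 0 := by
  have hm : (MvPolynomial.X 1 ^ 2 - 1 : MvPolynomial (Fin 2) ℂ) ^ 2 ∈ Iex := by
    rw [Ideal.mem_span_pair]
    exact ⟨MvPolynomial.X 1 ^ 2, -(MvPolynomial.X 0 * MvPolynomial.X 1 + 1), by ring⟩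
  simp only [← map_one (Ideal.Quotient.mk Iex), ← map_pow, ← map_sub]
  exact Ideal.Quotient.eq_zero_iff_mem.mpr hm

noncomputable def gex : Aex →ₐ[ℂ] (MvPolynomial (Fin 2) ℂ ⧸ Iex) :=
  AdjoinRoot.liftAlgHom pex (Algebra.ofId ℂ _) (Ideal.Quotient.mk Iex (MvPolynomial.X 1)) (show Polynomial.aeval _ pex = 0 by
    rw [show pex = (Polynomial.X ^ 2 - 1) ^ 2 from rfl]
    rw [map_pow, map_sub, map_pow, Polynomial.aeval_X, map_one]
    exact hIroot)

lemma gex_root : gex (AdjoinRoot.root pex) = Ideal.Quotient.mk Iex (MvPolynomial.X 1) := by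
  exact AdjoinRoot.liftAlgHom_root _ _ _ _

lemma gf : gex.comp fbar = AlgHom.id ℂ _ := by
  apply Ideal.Quotient.algHom_ext
  apply MvPolynomial.algHom_ext
  intro i
  fin_cases i
  · show gex (fbar (Ideal.Quotient.mk Iex (MvPolynomial.X 0))) = Ideal.Quotient.mk Iex (MvPolynomial.X 0)
    have h1 : fbar (Ideal.Quotient.mk Iex (MvPolynomial.X 0)) = 2 * AdjoinRoot.root pex - AdjoinRoot.root pex ^ 3 := by
      simp [fbar, fex]
      exact (Ideal.Quotient.lift_mk _ _ _).trans (by simp)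
    rw [h1, map_sub, map_mul, map_pow, map_ofNat, gex_root]
    have key : Ideal.Quotient.mk Iex (2 * MvPolynomial.X 1 - MvPolynomial.X 1 ^ 3 - MvPolynomial.X 0) = 0 := by
      rw [Ideal.Quotient.eq_zero_iff_mem, Ideal.mem_span_pair]
      exact ⟨-(MvPolynomial.X 1), MvPolynomial.X 0, by ring⟩
    simp only [map_sub, map_mul, map_pow, map_ofNat] at key
    linear_combination key
  · show gex (fbar (Ideal.Quotient.mk Iex (MvPolynomial.X 1))) = Ideal.Quotient.mk Iex (MvPolynomial.X 1)
    have h1 : fbar (Ideal.Quotient.mk Iex (MvPolynomial.X 1)) = AdjoinRoot.root pex := by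
      simp [fbar, fex]
      exact (Ideal.Quotient.lift_mk _ _ _).trans (by simp)
    rw [h1, gex_root]

lemma fg : fbar.comp gex = AlgHom.id ℂ _ := by
  apply AdjoinRoot.algHom_ext
  rw [AlgHom.comp_apply, AlgHom.id_apply]
  rw [gex_root]
  simp [fbar, fex]
  exact (Ideal.Quotient.lift_mk _ _ _).trans (by simp)

noncomputable def eqv : (MvPolynomial (Fin 2) ℂ ⧸ Iex) ≃ₐ[ℂ] Aex :=
  AlgEquiv.ofAlgHom fbar gex fg gf

lemma finrank_eq : Module.finrank ℂ (MvPolynomial (Fin 2) ℂ ⧸ Iex) = 4 := by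
  rw [eqv.toLinearEquiv.finrank_eq]
  have hdeg : pex.natDegree = 4 := by
    rw [show pex = (Polynomial.X ^ 2 - 1) ^ 2 from rfl]
    compute_degree!
  have hp : pex ≠ 0 := by
    intro h
    rw [h] at hdeg
    simp at hdeg
  rw [(AdjoinRoot.powerBasis hp).finrank, AdjoinRoot.powerBasis_dim]
  exact hdeg


end

end Aux

/-- Example 2.5: for I = ⟨∂x² + ∂y² − 2, ∂x∂y − 1⟩ ⊆ ℂ[∂x,∂y], the quotient is
4-dimensional over ℂ, but the residue classes of 1, ∂x, ∂y, ∂x∂y do NOT form a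
ℂ-basis: no border basis exists for the symmetric order ideal {1, ∂x, ∂y, ∂x∂y}. -/
theorem no_symmetric_border_basis :
    letI I : Ideal (MvPolynomial (Fin 2) ℂ) :=
      Ideal.span {X 0 ^ 2 + X 1 ^ 2 - 2, X 0 * X 1 - 1}
    letI v : Fin 4 → (MvPolynomial (Fin 2) ℂ ⧸ I) := ![Ideal.Quotient.mk I 1,
      Ideal.Quotient.mk I (X 0), Ideal.Quotient.mk I (X 1), Ideal.Quotient.mk I (X 0 * X 1)]
    Module.finrank ℂ (MvPolynomial (Fin 2) ℂ ⧸ I) = 4 ∧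
      ¬ (LinearIndependent ℂ v ∧ Submodule.span ℂ (Set.range v) = ⊤) := by
  refine ⟨finrank_eq, ?_⟩
  rintro ⟨hli, -⟩
  have h30 : (3 : Fin 4) = 0 := hli.injective (by
    show Ideal.Quotient.mk _ (X 0 * X 1) = Ideal.Quotient.mk _ 1
    rw [Ideal.Quotient.eq]
    exact Ideal.subset_span (by simp))
  exact absurd h30 (by decide)
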